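/- For the Werner state ρ_w = p₀|s⟩⟨s| + ((1−p₀)/3)·Σᵢ|tᵢ⟩⟨tᵢ| of two qubits, the partially transposed matrix satisfies ‖ρ_w^{T_A}‖₁ = 1/2 + p₀ + |1/2 − p₀|, and hence the logarithmic negativity E(ρ_w) = ln(1/2 + p₀ + |1/2 − p₀|) vanishes if and only if p₀ ≤ 1/2. -/

import Mathlib

open Matrix
open scoped ComplexOrder Kronecker

/-- The trace norm of a complex square matrix: `Tr √(X Xᴴ)`. -/
noncomputable def traceNorm {n : Type*} [Fintype n] [DecidableEq n]
    (X : Matrix n n ℂ) : ℝ :=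
  (((Matrix.posSemidef_self_mul_conjTranspose X).1.eigenvectorUnitary.1 *
      diagonal (((↑) : ℝ → ℂ) ∘ (√·) ∘ (Matrix.posSemidef_self_mul_conjTranspose X).1.eigenvalues) *
      (star (Matrix.posSemidef_self_mul_conjTranspose X).1.eigenvectorUnitary : Matrix n n ℂ)).trace).re

/-- A density matrix: positive semidefinite with unit trace. -/
def IsDensityMatrix {n : Type*} [Fintype n] [DecidableEq n]
    (ρ : Matrix n n ℂ) : Prop :=
  ρ.PosSemidef ∧ ρ.trace = 1

/-- Auxiliary matrix family used in the Werner-state computation. -/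
def Smat (d c e : ℝ) : Matrix (Fin 2 × Fin 2) (Fin 2 × Fin 2) ℂ :=
  fun i k => if i = k then (if i.1 = i.2 then (d : ℂ) else (c : ℂ))
    else if i.1 = i.2 ∧ k.1 = k.2 then (e : ℂ) else 0

lemma Smat_herm (d c e : ℝ) : (Smat d c e).IsHermitian := by
  ext ⟨i1, i2⟩ ⟨k1, k2⟩
  fin_cases i1 <;> fin_cases i2 <;> fin_cases k1 <;> fin_cases k2 <;>
    simp [Smat, conjTranspose_apply, Prod.ext_iff]

lemma Smat_mul (d c e d' c' e' : ℝ) :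
    Smat d c e * Smat d' c' e' = Smat (d*d'+e*e') (c*c') (d*e'+e*d') := by
  ext ⟨i1, i2⟩ ⟨k1, k2⟩
  fin_cases i1 <;> fin_cases i2 <;> fin_cases k1 <;> fin_cases k2 <;>
    (simp [Smat, mul_apply, Fintype.sum_prod_type, Fin.sum_univ_two, Prod.ext_iff];
     try push_cast; try ring)

lemma Smat_trace (d c e : ℝ) : (Smat d c e).trace = ((2*d + 2*c : ℝ) : ℂ) := by
  simp [Matrix.trace, Fintype.sum_prod_type, Fin.sum_univ_two, Smat, Matrix.diag]
  push_cast; ring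

lemma Smat_psd (d c e : ℝ) (h1 : 0 ≤ d + e) (h2 : 0 ≤ d - e) (h3 : 0 ≤ c) :
    (Smat d c e).PosSemidef := by
  refine Matrix.PosSemidef.of_dotProduct_mulVec_nonneg (Smat_herm d c e) fun x => ?_
  have key : star x ⬝ᵥ (Smat d c e).mulVec x =
      ((((d+e)/2) * Complex.normSq (x (0,0) + x (1,1))
        + ((d-e)/2) * Complex.normSq (x (0,0) - x (1,1))
        + c * Complex.normSq (x (0,1)) + c * Complex.normSq (x (1,0)) : ℝ) : ℂ) := by
    simp [dotProduct, mulVec, Fintype.sum_prod_type, Fin.sum_univ_two, Smat,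
      Pi.star_apply, Prod.ext_iff]
    push_cast [Complex.normSq_apply]
    simp only [Complex.star_def, Complex.ext_iff, Complex.add_re, Complex.add_im,
      Complex.mul_re, Complex.mul_im, Complex.sub_re, Complex.sub_im, Complex.conj_re,
      Complex.conj_im, Complex.ofReal_re, Complex.ofReal_im]
    norm_num
    constructor <;> ring
  rw [key]
  have hnn : 0 ≤ (((d+e)/2) * Complex.normSq (x (0,0) + x (1,1))
        + ((d-e)/2) * Complex.normSq (x (0,0) - x (1,1))
        + c * Complex.normSq (x (0,1)) + c * Complex.normSq (x (1,0)) : ℝ) := by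
    have := Complex.normSq_nonneg (x (0,0) + x (1,1))
    have := Complex.normSq_nonneg (x (0,0) - x (1,1))
    have := Complex.normSq_nonneg (x (0,1))
    have := Complex.normSq_nonneg (x (1,0))
    positivity
  exact_mod_cast Complex.zero_le_real.mpr hnn

/-- Logarithmic negativity of the two-qubit Werner state: the trace norm of
the partial transpose equals `1/2 + p₀ + |1/2 − p₀|`, so the logarithmic
negativity vanishes iff `p₀ ≤ 1/2`. -/
theorem werner_state_negativity (p₀ : ℝ) (hp0 : 0 ≤ p₀) (hp1 : p₀ ≤ 1)
    (ket : Fin 2 → Fin 2 → (Fin 2 × Fin 2 → ℂ))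
    (hket : ∀ a b x, ket a b x = if x = (a, b) then 1 else 0)
    (proj : (Fin 2 × Fin 2 → ℂ) → Matrix (Fin 2 × Fin 2) (Fin 2 × Fin 2) ℂ)
    (hproj : ∀ v i j, proj v i j = v i * star (v j))
    (s t0 : Fin 2 × Fin 2 → ℂ)
    (hs : s = fun x => (1 / (Real.sqrt 2 : ℂ)) * (ket 0 1 x - ket 1 0 x))
    (ht0 : t0 = fun x => (1 / (Real.sqrt 2 : ℂ)) * (ket 0 1 x + ket 1 0 x))
    (ρw : Matrix (Fin 2 × Fin 2) (Fin 2 × Fin 2) ℂ)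
    (hρw : ρw = (p₀ : ℂ) • proj s +
      (((1 - p₀) / 3 : ℝ) : ℂ) • (proj t0 + proj (ket 0 0) + proj (ket 1 1)))
    (ρT : Matrix (Fin 2 × Fin 2) (Fin 2 × Fin 2) ℂ)
    (hρT : ∀ i k : Fin 2 × Fin 2, ρT i k = ρw (k.1, i.2) (i.1, k.2)) :
    traceNorm ρT = 1 / 2 + p₀ + |1 / 2 - p₀| ∧
    (Real.log (traceNorm ρT) = 0 ↔ p₀ ≤ 1 / 2) := by
  have h2 : ((Real.sqrt 2 : ℂ)) * (Real.sqrt 2 : ℂ) = 2 := by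
    rw [← Complex.ofReal_mul, Real.mul_self_sqrt (by norm_num)]
    norm_num
  have hinv : ((Real.sqrt 2 : ℂ))⁻¹ * ((Real.sqrt 2 : ℂ))⁻¹ = 2⁻¹ := by
    rw [← mul_inv, h2]
  -- the relevant real parameters
  set a : ℝ := (1 - p₀) / 3 with ha
  set c : ℝ := (1 + 2 * p₀) / 6 with hc
  set b : ℝ := (a - p₀) / 2 with hb
  set u : ℝ := |1 / 2 - p₀| with hu
  -- the partial transpose is an explicit matrix
  have h1 : ρT = Smat a c b := by
    ext ⟨i1, i2⟩ ⟨k1, k2⟩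
    rw [hρT]
    fin_cases i1 <;> fin_cases i2 <;> fin_cases k1 <;> fin_cases k2 <;>
      (simp [hρw, hproj, hs, ht0, hket, Smat, Prod.ext_iff, ha, hc, hb];
       try rw [hinv]; try push_cast; try ring)
  have hc0 : 0 ≤ c := by rw [hc]; linarith
  have hu2 : u * u = (1 / 2 - p₀) * (1 / 2 - p₀) := abs_mul_abs_self _
  -- the positive square root of ρT * ρTᴴ
  have hpsd : (Smat ((u + c)/2) c ((u - c)/2)).PosSemidef := by
    refine Smat_psd _ _ _ ?_ ?_ hc0
    · have := abs_nonneg (1 / 2 - p₀)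
      rw [← hu] at this; linarith
    · linarith
  have hsq : (Smat ((u + c)/2) c ((u - c)/2)) ^ 2 = ρT * ρTᴴ := by
    rw [h1, Smat_herm a c b, sq, Smat_mul, Smat_mul]
    have e1 : (u + c)/2 * ((u + c)/2) + (u - c)/2 * ((u - c)/2) = a * a + b * b := by
      rw [ha, hb, hc] at *
      linear_combination hu2 / 2
    have e2 : (u + c)/2 * ((u - c)/2) + (u - c)/2 * ((u + c)/2) = a * b + b * a := by
      rw [ha, hb, hc] at *
      linear_combination hu2 / 2
    rw [e1, e2]
  have hsqrt : Smat ((u + c)/2) c ((u - c)/2) =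
      ((Matrix.posSemidef_self_mul_conjTranspose ρT).1.eigenvectorUnitary.1 *
      diagonal (((↑) : ℝ → ℂ) ∘ (√·) ∘ (Matrix.posSemidef_self_mul_conjTranspose ρT).1.eigenvalues) *
      (star (Matrix.posSemidef_self_mul_conjTranspose ρT).1.eigenvectorUnitary : Matrix _ _ ℂ)) := by
    open MatrixOrder in
    have e := (Matrix.posSemidef_self_mul_conjTranspose ρT).1.cfc_eq Real.sqrt
    open MatrixOrder in
    rw [IsHermitian.cfc, Unitary.conjStarAlgAut_apply] at e
    open MatrixOrder in
    refine (CFC.sqrt_unique (a := ρT * ρTᴴ) (by rw [← sq]; exact hsq) hpsd.nonneg).symm.trans ?_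
    open MatrixOrder in
    rw [CFC.sqrt_eq_real_sqrt _ (Matrix.posSemidef_self_mul_conjTranspose ρT).nonneg, cfcₙ_eq_cfc]
    exact e
  have htn : traceNorm ρT = 1 / 2 + p₀ + |1 / 2 - p₀| := by
    rw [traceNorm, ← hsqrt, Smat_trace, Complex.ofReal_re, hc, ← hu]
    ring
  refine ⟨htn, ?_⟩
  rw [htn]
  rcases le_or_gt p₀ (1 / 2) with h | h
  · have : |1 / 2 - p₀| = 1 / 2 - p₀ := abs_of_nonneg (by linarith)
    rw [this]
    constructor
    · intro _; exact h
    · intro _; rw [show (1:ℝ)/2 + p₀ + (1/2 - p₀) = 1 by ring, Real.log_one]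
  · have : |1 / 2 - p₀| = -(1 / 2 - p₀) := abs_of_neg (by linarith)
    rw [this]
    constructor
    · intro hlog
      exfalso
      have : (0:ℝ) < Real.log (1 / 2 + p₀ + -(1 / 2 - p₀)) :=
        Real.log_pos (by linarith)
      linarith [hlog ▸ this]
    · intro hle; linarith
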